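/- The arc estimate: for R > 0, |∫₀^{π/6} i·R·e^{iθ}·exp(i R³ e^{3iθ}) dθ| ≤ (π/(6R²))·(1 − e^{−R³}), and in particular this arc integral tends to 0 as R → ∞. -/

import Mathlib

/-!
On the arc `z = R e^{iθ}` we have `|exp (i z³)| = exp (-R³ sin 3θ)`, and the concavity bound
`sin 3θ ≥ 6θ/π` on `[0, π/6]` dominates the integrand by `R e^{-6R³θ/π}`, whose integral over
`[0, π/6]` is exactly `π (1 - e^{-R³}) / (6R²)`.
-/

open Filter Real

open Complex in
lemma Complex.norm_exp_I_mul_ofReal_mul_exp_I_mul (r x : ℝ) :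
    ‖exp (I * r * exp (I * x))‖ = Real.exp (-(r * Real.sin x)) := by
  rw [norm_exp, mul_assoc, I_mul_re, im_ofReal_mul, mul_comm I, exp_ofReal_mul_I_im]

lemma six_div_pi_mul_le_sin_three_mul {θ : ℝ} (h₀ : 0 ≤ θ) (h₁ : θ ≤ π / 6) :
    6 / π * θ ≤ sin (3 * θ) := by
  convert mul_le_sin (x := 3 * θ) (by linarith) (by linarith) using 1
  ring

lemma integral_exp_neg_mul (c a : ℝ) (hc : c ≠ 0) :
    ∫ x in (0 : ℝ)..a, exp (-(c * x)) = (1 - exp (-(c * a))) / c := by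
  simp_rw [← neg_mul]
  rw [intervalIntegral.integral_comp_mul_left exp (neg_ne_zero.2 hc), integral_exp,
    mul_zero, exp_zero, smul_eq_mul, inv_neg]
  field_simp
  ring

open Complex in
noncomputable def arcIntegrand (R θ : ℝ) : ℂ :=
  I * R * exp (I * θ) * exp (I * (R : ℂ) ^ 3 * exp (3 * I * θ))

noncomputable def arcIntegral (R : ℝ) : ℂ :=
  ∫ θ in (0 : ℝ)..π / 6, arcIntegrand R θ

lemma norm_arcIntegrand {R : ℝ} (hR : 0 ≤ R) (θ : ℝ) :
    ‖arcIntegrand R θ‖ = R * exp (-(R ^ 3 * sin (3 * θ))) := by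
  have h3 : (3 * Complex.I * θ : ℂ) = Complex.I * (3 * θ : ℝ) := by push_cast; ring
  rw [arcIntegrand, h3, ← Complex.ofReal_pow, norm_mul, norm_mul, norm_mul,
    Complex.norm_exp_I_mul_ofReal_mul_exp_I_mul, Complex.norm_exp_I_mul_ofReal, Complex.norm_I,
    Complex.norm_real, Real.norm_of_nonneg hR, one_mul, mul_one]

lemma norm_arcIntegrand_le {R θ : ℝ} (hR : 0 ≤ R) (h₀ : 0 ≤ θ) (h₁ : θ ≤ π / 6) :
    ‖arcIntegrand R θ‖ ≤ R * exp (-(6 * R ^ 3 / π * θ)) := by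
  rw [norm_arcIntegrand hR]
  gcongr R * exp (-?_)
  calc 6 * R ^ 3 / π * θ = R ^ 3 * (6 / π * θ) := by ring
    _ ≤ R ^ 3 * sin (3 * θ) := by gcongr; exact six_div_pi_mul_le_sin_three_mul h₀ h₁

lemma norm_arcIntegral_le {R : ℝ} (hR : 0 < R) :
    ‖arcIntegral R‖ ≤ π / (6 * R ^ 2) * (1 - exp (-(R ^ 3))) := by
  have hc : 6 * R ^ 3 / π ≠ 0 := by positivity
  calc ‖arcIntegral R‖ ≤ ∫ θ in (0 : ℝ)..π / 6, R * exp (-(6 * R ^ 3 / π * θ)) := by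
        refine intervalIntegral.norm_integral_le_of_norm_le (by positivity)
          (.of_forall fun θ hθ => norm_arcIntegrand_le hR.le hθ.1.le hθ.2) ?_
        exact (continuous_const.mul (by fun_prop)).intervalIntegrable _ _
    _ = π / (6 * R ^ 2) * (1 - exp (-(R ^ 3))) := by
        rw [intervalIntegral.integral_const_mul, integral_exp_neg_mul _ _ hc]
        field_simp

lemma tendsto_arcIntegral_atTop : Tendsto arcIntegral atTop (nhds 0) := by
  have h_bound : ∀ᶠ R in atTop, ‖arcIntegral R‖ ≤ π / (6 * R ^ 2) := by
    filter_upwards [eventually_gt_atTop 0] with R hR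
    refine (norm_arcIntegral_le hR).trans (mul_le_of_le_one_right (by positivity) ?_)
    linarith [exp_pos (-(R ^ 3))]
  refine squeeze_zero_norm' h_bound (tendsto_const_nhds.div_atTop ?_)
  exact (tendsto_pow_atTop two_ne_zero).const_mul_atTop (by norm_num)

/-- Arc estimate: for `R > 0`, the arc integral `J(R)` satisfies
`|J(R)| ≤ (π/(6R²))(1 − e^{−R³})`, and `J(R) → 0` as `R → ∞`. -/
theorem arc_integral_estimate :
    (∀ R : ℝ, 0 < R →
        ‖(∫ θ in (0:ℝ)..(Real.pi / 6),
              Complex.I * (R:ℂ) * Complex.exp (Complex.I * (θ:ℂ))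
                * Complex.exp (Complex.I * (R:ℂ) ^ 3
                    * Complex.exp (3 * Complex.I * (θ:ℂ))))‖
          ≤ Real.pi / (6 * R ^ 2) * (1 - Real.exp (-(R ^ 3)))) ∧
    Tendsto
      (fun R : ℝ =>
        ∫ θ in (0:ℝ)..(Real.pi / 6),
          Complex.I * (R:ℂ) * Complex.exp (Complex.I * (θ:ℂ))
            * Complex.exp (Complex.I * (R:ℂ) ^ 3
                * Complex.exp (3 * Complex.I * (θ:ℂ))))
      atTop (nhds 0) :=
  ⟨fun _ hR => norm_arcIntegral_le hR, tendsto_arcIntegral_atTop⟩
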